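/- arXiv:math/9803085 — 2 statements merged into one kernel-verified Lean document; each statement's English description precedes it below -/
import Mathlib

section
/- Let R be a graded F-algebra and d > 0. Every d-dimensional deformation of R is isomorphic, as a deformation of R, to (R̃_ψ, ε, j) for some ψ ∈ Z_d(R). -/
/-- A finite-dimensional graded-commutative ℤ-graded `F`-algebra
("graded F-algebra" in the sense of Seidel's paper). -/
structure GradedFAlg (F : Type) [Field F] where
  carrier : Type
  [ring : Ring carrier]
  [alg : Algebra F carrier]
  grading : ℤ → Submodule F carrier
  [gradedAlgebra : GradedAlgebra grading]
  [findim : FiniteDimensional F carrier]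
  gcomm : ∀ (i j : ℤ) (x y : carrier), x ∈ grading i → y ∈ grading j →
    x * y = ((-1 : F) ^ (i * j)) • (y * x)

attribute [instance] GradedFAlg.ring GradedFAlg.alg GradedFAlg.gradedAlgebra GradedFAlg.findim

variable {F : Type} [Field F]

/-- A homomorphism of graded `F`-algebras. -/
structure GradedFAlg.Hom (A B : GradedFAlg F) where
  toAlgHom : A.carrier →ₐ[F] B.carrier
  graded : ∀ (i : ℤ) (x : A.carrier), x ∈ A.grading i → toAlgHom x ∈ B.grading i

/-- The identity homomorphism of graded `F`-algebras. -/
def GradedFAlg.Hom.id (A : GradedFAlg F) : GradedFAlg.Hom A A :=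
  ⟨AlgHom.id F A.carrier, fun _ _ h => h⟩

/-- A `d`-dimensional (first order infinitesimal) deformation `(R̃, t, j)` of `A`:
`t ∈ R̃^d` with `t² = 0` whose annihilator is exactly `t·R̃`, and `j : R̃ → A`
a surjective homomorphism of graded algebras with kernel `t·R̃`. -/
structure Deformation (F : Type) [Field F] (A : GradedFAlg F) (d : ℤ) where
  alg : GradedFAlg F
  t : alg.carrier
  t_mem : t ∈ alg.grading d
  t_sq : t * t = 0
  t_ann : ∀ x : alg.carrier, t * x = 0 ↔ ∃ y : alg.carrier, x = t * y
  j : GradedFAlg.Hom alg A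
  j_surj : Function.Surjective j.toAlgHom
  j_ker : ∀ x : alg.carrier, j.toAlgHom x = 0 ↔ ∃ y : alg.carrier, x = t * y

/-- A morphism of deformations over a homomorphism `f` of graded `F`-algebras. -/
structure DefMorphismOver {A B : GradedFAlg F} (f : GradedFAlg.Hom A B) {d : ℤ}
    (D1 : Deformation F A d) (D2 : Deformation F B d) where
  toHom : GradedFAlg.Hom D1.alg D2.alg
  map_t : toHom.toAlgHom D1.t = D2.t
  over_f : ∀ x, D2.j.toAlgHom (toHom.toAlgHom x) = f.toAlgHom (D1.j.toAlgHom x)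

/-- Two deformations of `A` are isomorphic if there is a bijective morphism of
deformations (i.e. a morphism over the identity of `A`) between them. -/
def Deformation.Iso {A : GradedFAlg F} {d : ℤ} (D1 D2 : Deformation F A d) : Prop :=
  ∃ φ : DefMorphismOver (GradedFAlg.Hom.id A) D1 D2, Function.Bijective φ.toHom.toAlgHom

/-- `ψ ∈ Z_d(R)`: an `F`-bilinear map `R × R → R` of degree `-d`, graded
symmetric, satisfying the cocycle identity
`(-1)^{d·deg x}·x·ψ(y,z) - ψ(xy,z) + ψ(x,yz) - ψ(x,y)·z = 0`. -/
structure IsCocycle (R : GradedFAlg F) (d : ℤ)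
    (ψ : R.carrier →ₗ[F] R.carrier →ₗ[F] R.carrier) : Prop where
  deg : ∀ (i j : ℤ) (x y : R.carrier), x ∈ R.grading i → y ∈ R.grading j →
    ψ x y ∈ R.grading (i + j - d)
  symm : ∀ (i j : ℤ) (x y : R.carrier), x ∈ R.grading i → y ∈ R.grading j →
    ψ x y = ((-1 : F) ^ (i * j)) • ψ y x
  cocycle : ∀ (i : ℤ) (x y z : R.carrier), x ∈ R.grading i →
    ((-1 : F) ^ (d * i)) • (x * ψ y z) - ψ (x * y) z + ψ x (y * z) - ψ x y * z = 0

/-- The deformation `D` "is" the twisted algebra `R̃_ψ = R ⊕ R·ε`: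
there is an `F`-linear identification `e` of `D.alg` with `R × R` under which
multiplication becomes the twisted product
`(x₀ + x₁ε)(y₀ + y₁ε) = x₀y₀ + ((-1)^{d·deg x₀} x₀y₁ + x₁y₀ + ψ(x₀,y₀))ε`
(the sign operator `σ` being `σ x = (-1)^{d·deg x}·x` on homogeneous elements),
`t` becomes `ε`, `j` becomes the projection to the first factor, and the grading
of `D.alg` is the evident grading of `R ⊕ R·ε` with `deg ε = d`. -/
def IsTwistedModel (R : GradedFAlg F) (d : ℤ) (σ : R.carrier →ₗ[F] R.carrier)
    (ψ : R.carrier →ₗ[F] R.carrier →ₗ[F] R.carrier) (D : Deformation F R d) : Prop :=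
  ∃ e : D.alg.carrier ≃ₗ[F] R.carrier × R.carrier,
    (∀ x y : D.alg.carrier, e (x * y) =
      ((e x).1 * (e y).1, σ (e x).1 * (e y).2 + (e x).2 * (e y).1 + ψ (e x).1 (e y).1)) ∧
    e 1 = (1, 0) ∧
    e D.t = (0, 1) ∧
    (∀ x, D.j.toAlgHom x = (e x).1) ∧
    (∀ (i : ℤ) (x : D.alg.carrier), x ∈ D.alg.grading i ↔
      (e x).1 ∈ R.grading i ∧ (e x).2 ∈ R.grading (i - d))

/-!
Choose a degree-preserving linear section `s` of `j` with `s 1 = 1`; it exists because `j` is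
surjective in each degree. Since `t² = 0` and `ann t = ker j = t R̃`, every element of `R̃` is
uniquely `s a + t s b`, which identifies `R̃` with `R ⊕ R ε`. Take `ψ(x, y)` to be the
`ε`-component of `s x * s y`. Graded commutativity moves `t` past `s x` at the cost of the sign
`(-1)^(d deg x)`, which yields the twisted product, and associativity of `R̃` becomes the
cocycle identity.
-/

theorem LinearMap.exists_rightInverse_apply_eq {V W : Type*} [AddCommGroup V] [Module F V]
    [AddCommGroup W] [Module F W] (f : V →ₗ[F] W) (hf : Function.Surjective f) {v : V} {w : W}
    (hfv : f v = w) (hw : w = 0 → v = 0) :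
    ∃ g : W →ₗ[F] V, (∀ y, f (g y) = y) ∧ g w = v := by
  obtain ⟨g₀, hg₀⟩ := f.exists_rightInverse_of_surjective (LinearMap.range_eq_top.mpr hf)
  have hg₀y (y : W) : f (g₀ y) = y := LinearMap.congr_fun hg₀ y
  by_cases hw0 : w = 0
  · exact ⟨g₀, hg₀y, by rw [hw0, map_zero, hw hw0]⟩
  obtain ⟨φ, hφ⟩ := Module.Projective.exists_dual_eq_one F hw0
  -- correct `g₀` along the line through `w` by an element of `ker f`
  refine ⟨g₀ + φ.smulRight (v - g₀ w), fun y => ?_, ?_⟩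
  · simp [hg₀y, hfv]
  · simp [hφ]

namespace DirectSum

variable {ι A B : Type*} [DecidableEq ι] [AddCommGroup A] [Module F A] [AddCommGroup B]
  [Module F B] (𝒜 : ι → Submodule F A) (ℬ : ι → Submodule F B)
  [Decomposition 𝒜] [Decomposition ℬ]

theorem decompose_map_of_mapsTo_add [AddRightCancelSemigroup ι] (f : A →ₗ[F] B) (c : ι)
    (hf : ∀ i x, x ∈ 𝒜 i → f x ∈ ℬ (i + c)) (r : A) {i j : ι} (hij : i + c = j) :
    (decompose ℬ (f r) j : B) = f (decompose 𝒜 r i : A) := by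
  subst hij
  induction r using Decomposition.inductionOn (ℳ := 𝒜) with
  | zero => simp
  | @homogeneous k m =>
    by_cases hik : i = k
    · subst hik
      rw [decompose_of_mem_same 𝒜 m.2, decompose_of_mem_same ℬ (hf i m m.2)]
    · rw [decompose_of_mem_ne 𝒜 m.2 (Ne.symm hik),
        decompose_of_mem_ne ℬ (hf k m m.2) fun h => hik (add_right_cancel h).symm, map_zero]
  | add x y hx hy => simp only [map_add, decompose_add, add_apply, Submodule.coe_add, hx, hy]

theorem mem_of_decompose_ne_eq_zero {x : A} {i : ι}
    (hx : ∀ j, j ≠ i → (decompose 𝒜 x j : A) = 0) : x ∈ 𝒜 i := by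
  have hdx : decompose 𝒜 x = of _ i (decompose 𝒜 x i) := by
    ext j
    by_cases hj : j = i
    · subst hj; rw [of_eq_same]
    · rw [of_eq_of_ne _ _ _ hj, hx j hj, ZeroMemClass.coe_zero]
  rw [← (decompose 𝒜).symm_apply_apply x, hdx, decompose_symm_of]
  exact (decompose 𝒜 x i).2

theorem exists_graded_rightInverse_apply_eq [AddRightCancelMonoid ι] (f : A →ₗ[F] B)
    (hf : ∀ i x, x ∈ 𝒜 i → f x ∈ ℬ i) (hsurj : Function.Surjective f) {i₀ : ι} {v : A} {w : B}
    (hv : v ∈ 𝒜 i₀) (hw : w ∈ ℬ i₀) (hfv : f v = w) (hw0 : w = 0 → v = 0) :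
    ∃ g : B →ₗ[F] A, (∀ y, f (g y) = y) ∧ (∀ i y, y ∈ ℬ i → g y ∈ 𝒜 i) ∧ g w = v := by
  have hdec (r : A) (i : ι) : (decompose ℬ (f r) i : B) = f (decompose 𝒜 r i) :=
    decompose_map_of_mapsTo_add 𝒜 ℬ f 0 (fun i x hx => (add_zero i).symm ▸ hf i x hx) r
      (add_zero i)
  have hsec (i : ι) : ∃ g : ℬ i →ₗ[F] 𝒜 i, (∀ y, f (g y) = y) ∧
      g (decompose ℬ w i) = decompose 𝒜 v i := by
    let fᵢ : 𝒜 i →ₗ[F] ℬ i := f.restrict (hf i)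
    have hfᵢ : Function.Surjective fᵢ := by
      rintro ⟨y, hy⟩
      obtain ⟨r, rfl⟩ := hsurj y
      exact ⟨decompose 𝒜 r i, Subtype.ext <| by simp [fᵢ, ← hdec, decompose_of_mem_same ℬ hy]⟩
    obtain ⟨g, hg, hgw⟩ := fᵢ.exists_rightInverse_apply_eq hfᵢ (v := decompose 𝒜 v i)
      (w := decompose ℬ w i) (Subtype.ext <| by simp [fᵢ, ← hdec, hfv]) fun h => by
        by_cases hi : i = i₀
        · subst hi
          have hw' := congrArg Subtype.val h
          rw [decompose_of_mem_same ℬ hw, ZeroMemClass.coe_zero] at hw'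
          exact Subtype.ext (by rw [decompose_of_mem_same 𝒜 hv, hw0 hw', ZeroMemClass.coe_zero])
        · exact Subtype.ext (decompose_of_mem_ne 𝒜 hv (Ne.symm hi))
    exact ⟨g, fun y => congrArg Subtype.val (hg y), hgw⟩
  choose g hg hgw using hsec
  let s : B →ₗ[F] A :=
    (toModule F ι A fun i => (𝒜 i).subtype ∘ₗ g i) ∘ₗ (decomposeLinearEquiv ℬ).toLinearMap
  have hs (i : ι) (y : ℬ i) : s y = g i y := by
    simp [s, decomposeLinearEquiv_apply, decompose_coe, ← lof_eq_of F, toModule_lof]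
  refine ⟨s, fun y => ?_, fun i y hy => hs i ⟨y, hy⟩ ▸ (g i _).2, ?_⟩
  · induction y using Decomposition.inductionOn (ℳ := ℬ) with
    | zero => simp
    | @homogeneous i y => rw [hs, hg]
    | add a b ha hb => rw [map_add, map_add, ha, hb]
  · have hwi : decompose ℬ w i₀ = ⟨w, hw⟩ := Subtype.ext (decompose_of_mem_same ℬ hw)
    rw [hs i₀ ⟨w, hw⟩, ← hwi, hgw, decompose_of_mem_same 𝒜 hv]

end DirectSum

namespace Deformation

variable {R : GradedFAlg F} {d : ℤ} (D : Deformation F R d)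

theorem j_t_eq_zero : D.j.toAlgHom D.t = 0 := (D.j_ker D.t).mpr ⟨1, (mul_one _).symm⟩

theorem t_mul_mul_t (a : D.alg.carrier) : D.t * (a * D.t) = 0 := by
  induction a using DirectSum.Decomposition.inductionOn (ℳ := D.alg.grading) with
  | zero => simp
  | @homogeneous m a =>
    rw [D.alg.gcomm m d a D.t a.2 D.t_mem, mul_smul_comm, ← mul_assoc, D.t_sq, zero_mul,
      smul_zero]
  | add a b ha hb => rw [add_mul, mul_add, ha, hb, add_zero]

theorem t_mul_mul_t_mul (a b : D.alg.carrier) : D.t * a * (D.t * b) = 0 := by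
  rw [← mul_assoc, mul_assoc D.t a D.t, t_mul_mul_t, zero_mul]

theorem one_eq_zero_of_one_eq_zero (h : (1 : R.carrier) = 0) : (1 : D.alg.carrier) = 0 := by
  obtain ⟨y, hy⟩ := (D.j_ker 1).mp (by rw [map_one, h])
  -- `1 ∈ t·R̃` forces `t = t² y = 0`, and then everything annihilates `t`
  have ht : D.t = 0 := by simpa [← mul_assoc, D.t_sq] using congrArg (D.t * ·) hy
  obtain ⟨z, hz⟩ := (D.t_ann 1).mp (by rw [ht, zero_mul])
  rw [hz, ht, zero_mul]

theorem exists_gradedSection :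
    ∃ s : R.carrier →ₗ[F] D.alg.carrier, (∀ x, D.j.toAlgHom (s x) = x) ∧
      (∀ i x, x ∈ R.grading i → s x ∈ D.alg.grading i) ∧ s 1 = 1 :=
  DirectSum.exists_graded_rightInverse_apply_eq D.alg.grading R.grading D.j.toAlgHom.toLinearMap
    D.j.graded D.j_surj (SetLike.one_mem_graded _) (SetLike.one_mem_graded _)
    (map_one D.j.toAlgHom) D.one_eq_zero_of_one_eq_zero

variable {D}

def sectionSum (s : R.carrier →ₗ[F] D.alg.carrier) : R.carrier × R.carrier →ₗ[F] D.alg.carrier :=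
  s ∘ₗ LinearMap.fst F _ _ + (LinearMap.mulLeft F D.t ∘ₗ s) ∘ₗ LinearMap.snd F _ _

theorem sectionSum_apply (s : R.carrier →ₗ[F] D.alg.carrier) (p : R.carrier × R.carrier) :
    sectionSum s p = s p.1 + D.t * s p.2 := rfl

variable {s : R.carrier →ₗ[F] D.alg.carrier} (hs : ∀ x, D.j.toAlgHom (s x) = x)
include hs

theorem t_mul_section_eq_zero_iff {b : R.carrier} : D.t * s b = 0 ↔ b = 0 := by
  refine ⟨fun h => ?_, fun h => by rw [h, map_zero, mul_zero]⟩
  obtain ⟨y, hy⟩ := (D.t_ann (s b)).mp h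
  simpa [hs, D.j_t_eq_zero] using congrArg D.j.toAlgHom hy

theorem sectionSum_bijective : Function.Bijective (sectionSum s) := by
  refine ⟨(injective_iff_map_eq_zero _).mpr fun p hp => ?_, fun z => ?_⟩
  · rw [sectionSum_apply] at hp
    have h₁ : p.1 = 0 := by simpa [hs, D.j_t_eq_zero] using congrArg D.j.toAlgHom hp
    rw [h₁, map_zero, zero_add, t_mul_section_eq_zero_iff hs] at hp
    exact Prod.ext h₁ hp
  · -- peel off `s (j z)`, then `s (j y)` from the remainder `t y`, using `t² = 0`
    obtain ⟨y, hy⟩ := (D.j_ker (z - s (D.j.toAlgHom z))).mp (by simp [hs])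
    obtain ⟨w, hw⟩ := (D.j_ker (y - s (D.j.toAlgHom y))).mp (by simp [hs])
    have hty : D.t * y = D.t * s (D.j.toAlgHom y) := by
      rw [← sub_eq_zero, ← mul_sub, hw, ← mul_assoc, D.t_sq, zero_mul]
    exact ⟨(D.j.toAlgHom z, D.j.toAlgHom y), by rw [sectionSum_apply, ← hty, ← hy]; abel⟩

noncomputable def sectionEquiv : D.alg.carrier ≃ₗ[F] R.carrier × R.carrier :=
  (LinearEquiv.ofBijective _ (sectionSum_bijective hs)).symm

theorem sectionEquiv_sectionSum (p : R.carrier × R.carrier) :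
    sectionEquiv hs (sectionSum s p) = p :=
  (LinearEquiv.ofBijective _ (sectionSum_bijective hs)).symm_apply_apply p

theorem sectionSum_sectionEquiv (z : D.alg.carrier) : sectionSum s (sectionEquiv hs z) = z :=
  (LinearEquiv.ofBijective _ (sectionSum_bijective hs)).apply_symm_apply z

theorem j_eq_sectionEquiv_fst (z : D.alg.carrier) : D.j.toAlgHom z = (sectionEquiv hs z).1 := by
  conv_lhs => rw [← sectionSum_sectionEquiv hs z]
  simp [sectionSum_apply, hs, D.j_t_eq_zero]

noncomputable def sectionCocycle : R.carrier →ₗ[F] R.carrier →ₗ[F] R.carrier :=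
  ((LinearMap.mul F D.alg.carrier).compl₁₂ s s).compr₂
    (LinearMap.snd F _ _ ∘ₗ (sectionEquiv hs).toLinearMap)

theorem sectionCocycle_apply (x y : R.carrier) :
    sectionCocycle hs x y = (sectionEquiv hs (s x * s y)).2 := rfl

theorem section_mul_section (x y : R.carrier) :
    s x * s y = sectionSum s (x * y, sectionCocycle hs x y) := by
  have he : sectionEquiv hs (s x * s y) = (x * y, sectionCocycle hs x y) :=
    Prod.ext (by rw [← j_eq_sectionEquiv_fst hs, map_mul, hs, hs]) rfl
  rw [← he, sectionSum_sectionEquiv]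

theorem t_mul_section_mul_section (x y : R.carrier) :
    D.t * (s x * s y) = D.t * s (x * y) := by
  rw [section_mul_section hs, sectionSum_apply, mul_add, ← mul_assoc, D.t_sq, zero_mul, add_zero]

theorem sectionSum_mul_section (p : R.carrier × R.carrier) (z : R.carrier) :
    sectionSum s p * s z = sectionSum s (p.1 * z, p.2 * z + sectionCocycle hs p.1 z) := by
  rw [sectionSum_apply s p, add_mul, mul_assoc, t_mul_section_mul_section hs,
    section_mul_section hs]
  simp only [sectionSum_apply, map_add, mul_add]
  abel

variable (hsgr : ∀ i x, x ∈ R.grading i → s x ∈ D.alg.grading i)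
include hsgr

theorem section_mul_t_mul_section {i : ℤ} {x : R.carrier} (hx : x ∈ R.grading i)
    (y : R.carrier) : s x * (D.t * s y) = D.t * s (((-1 : F) ^ (d * i)) • (x * y)) := by
  rw [← mul_assoc, D.alg.gcomm i d _ _ (hsgr i x hx) D.t_mem, smul_mul_assoc, mul_assoc,
    t_mul_section_mul_section hs, map_smul, mul_smul_comm, mul_comm i d]

theorem section_mul_sectionSum_of_mem {i : ℤ} {x : R.carrier} (hx : x ∈ R.grading i)
    (q : R.carrier × R.carrier) : s x * sectionSum s q =
      sectionSum s (x * q.1, ((-1 : F) ^ (d * i)) • (x * q.2) + sectionCocycle hs x q.1) := by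
  rw [sectionSum_apply s q, mul_add, section_mul_section hs, section_mul_t_mul_section hs hsgr hx]
  simp only [sectionSum_apply, map_add, mul_add]
  abel

theorem t_mul_section_mem_iff {b : R.carrier} {i : ℤ} :
    D.t * s b ∈ D.alg.grading i ↔ b ∈ R.grading (i - d) := by
  have hmaps (m : ℤ) (w : R.carrier) (hw : w ∈ R.grading m) :
      (LinearMap.mulLeft F D.t ∘ₗ s) w ∈ D.alg.grading (m + d) :=
    add_comm d m ▸ SetLike.mul_mem_graded D.t_mem (hsgr m w hw)
  refine ⟨fun hb => DirectSum.mem_of_decompose_ne_eq_zero _ fun m hm => ?_, fun hb => ?_⟩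
  · rw [← t_mul_section_eq_zero_iff hs]
    have hdec := DirectSum.decompose_map_of_mapsTo_add R.grading D.alg.grading _ d hmaps b
      (i := m) rfl
    simp only [LinearMap.comp_apply, LinearMap.mulLeft_apply] at hdec
    rw [← hdec, DirectSum.decompose_of_mem_ne _ hb]
    omega
  · simpa using hmaps _ _ hb

theorem mem_grading_iff {i : ℤ} {z : D.alg.carrier} : z ∈ D.alg.grading i ↔
    (sectionEquiv hs z).1 ∈ R.grading i ∧ (sectionEquiv hs z).2 ∈ R.grading (i - d) := by
  rw [← t_mul_section_mem_iff hs hsgr]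
  conv_lhs => rw [← sectionSum_sectionEquiv hs z]
  rw [sectionSum_apply]
  refine ⟨fun h => ?_, fun ⟨h₁, h₂⟩ => add_mem (hsgr i _ h₁) h₂⟩
  have h₁ : (sectionEquiv hs z).1 ∈ R.grading i := by
    rw [← j_eq_sectionEquiv_fst hs, ← sectionSum_sectionEquiv hs z]
    exact D.j.graded i _ (by rwa [sectionSum_apply])
  exact ⟨h₁, (add_mem_cancel_left (hsgr i _ h₁)).mp h⟩

theorem isCocycle_sectionCocycle : IsCocycle R d (sectionCocycle hs) where
  deg i j x y hx hy :=
    ((mem_grading_iff hs hsgr).mp (SetLike.mul_mem_graded (hsgr i x hx) (hsgr j y hy))).2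
  symm i j x y hx hy := by
    rw [sectionCocycle_apply, sectionCocycle_apply,
      D.alg.gcomm i j _ _ (hsgr i x hx) (hsgr j y hy), map_smul, Prod.smul_snd]
  cocycle i x y z hx := by
    -- compare the `ε`-components of the two bracketings of `s x * s y * s z`
    have h := congrArg (fun w => (sectionEquiv hs w).2) (mul_assoc (s x) (s y) (s z))
    simp only [section_mul_section hs, sectionSum_mul_section hs,
      section_mul_sectionSum_of_mem hs hsgr hx, sectionEquiv_sectionSum] at h
    rw [← sub_eq_zero.mpr h.symm]
    abel

variable {σ : R.carrier →ₗ[F] R.carrier}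
  (hσ : ∀ (i : ℤ) (x : R.carrier), x ∈ R.grading i → σ x = ((-1 : F) ^ (d * i)) • x)
include hσ

theorem section_mul_sectionSum (x : R.carrier) (q : R.carrier × R.carrier) :
    s x * sectionSum s q = sectionSum s (x * q.1, σ x * q.2 + sectionCocycle hs x q.1) := by
  induction x using DirectSum.Decomposition.inductionOn (ℳ := R.grading) with
  | zero => simp [sectionSum_apply]
  | @homogeneous i x =>
    rw [section_mul_sectionSum_of_mem hs hsgr x.2, hσ i x x.2, smul_mul_assoc]
  | add a b ha hb =>
    rw [map_add, add_mul, ha, hb, ← map_add, Prod.mk_add_mk]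
    congr 2
    · exact (add_mul a b q.1).symm
    · simp only [map_add, LinearMap.add_apply, add_mul]
      abel

theorem sectionSum_mul_sectionSum (p q : R.carrier × R.carrier) :
    sectionSum s p * sectionSum s q = sectionSum s
      (p.1 * q.1, σ p.1 * q.2 + p.2 * q.1 + sectionCocycle hs p.1 q.1) := by
  have ht : D.t * s p.2 * sectionSum s q = D.t * s (p.2 * q.1) := by
    rw [sectionSum_apply, mul_add, t_mul_mul_t_mul, add_zero, mul_assoc,
      t_mul_section_mul_section hs]
  rw [sectionSum_apply s p, add_mul, section_mul_sectionSum hs hsgr hσ, ht]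
  simp only [sectionSum_apply, map_add, mul_add]
  abel

theorem sectionEquiv_mul (z w : D.alg.carrier) : sectionEquiv hs (z * w) =
    ((sectionEquiv hs z).1 * (sectionEquiv hs w).1,
      σ (sectionEquiv hs z).1 * (sectionEquiv hs w).2 +
        (sectionEquiv hs z).2 * (sectionEquiv hs w).1 +
        sectionCocycle hs (sectionEquiv hs z).1 (sectionEquiv hs w).1) := by
  conv_lhs => rw [← sectionSum_sectionEquiv hs z, ← sectionSum_sectionEquiv hs w]
  rw [sectionSum_mul_sectionSum hs hsgr hσ, sectionEquiv_sectionSum]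

theorem isTwistedModel_sectionCocycle (hs1 : s 1 = 1) :
    IsTwistedModel R d σ (sectionCocycle hs) D := by
  have h1 : sectionSum s (1, 0) = 1 := by simp [sectionSum_apply, hs1]
  have ht : sectionSum s (0, 1) = D.t := by simp [sectionSum_apply, hs1]
  exact ⟨sectionEquiv hs, sectionEquiv_mul hs hsgr hσ,
    by rw [← h1, sectionEquiv_sectionSum], by rw [← ht, sectionEquiv_sectionSum],
    j_eq_sectionEquiv_fst hs, fun i z => mem_grading_iff hs hsgr⟩

end Deformation

theorem every_deformation_is_twisted_model_general
    {F : Type} [Field F] (R : GradedFAlg F) (d : ℤ)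
    (σ : R.carrier →ₗ[F] R.carrier)
    (hσ : ∀ (i : ℤ) (x : R.carrier), x ∈ R.grading i → σ x = ((-1 : F) ^ (d * i)) • x)
    (D : Deformation F R d) :
    ∃ ψ : R.carrier →ₗ[F] R.carrier →ₗ[F] R.carrier,
      IsCocycle R d ψ ∧ IsTwistedModel R d σ ψ D := by
  obtain ⟨s, hs, hsgr, hs1⟩ := D.exists_gradedSection
  exact ⟨Deformation.sectionCocycle hs, Deformation.isCocycle_sectionCocycle hs hsgr,
    Deformation.isTwistedModel_sectionCocycle hs hsgr hσ hs1⟩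

/-- Every `d`-dimensional deformation of a graded `F`-algebra
`R` is isomorphic, as a deformation of `R`, to `(R̃_ψ, ε, j)` for some
`ψ ∈ Z_d(R)`; equivalently, every deformation of `R` is itself a model of some
twisted algebra `R̃_ψ`. -/
theorem every_deformation_is_twisted_model
    {F : Type} [Field F] (R : GradedFAlg F) (d : ℤ) (hd : 0 < d)
    (σ : R.carrier →ₗ[F] R.carrier)
    (hσ : ∀ (i : ℤ) (x : R.carrier), x ∈ R.grading i → σ x = ((-1 : F) ^ (d * i)) • x)
    (D : Deformation F R d) :
    ∃ ψ : R.carrier →ₗ[F] R.carrier →ₗ[F] R.carrier,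
      IsCocycle R d ψ ∧ IsTwistedModel R d σ ψ D :=
  every_deformation_is_twisted_model_general R d σ hσ D
end

section
/- Let R1, R2 be graded F-algebras, R = R1 ⊗ R2 their graded tensor product, and d > 0. If a d-dimensional deformation (R̃, t, j) of R is semi-split with respect to R1 and also semi-split with respect to R2, then it is split, i.e. isomorphic as a deformation of R to the exterior product of a d-dimensional deformation of R1 and a d-dimensional deformation of R2. -/
variable {F : Type} [Field F]

/-- `R` is (a model of) the graded tensor product `R1 ⊗ R2` via the two graded
algebra homomorphisms `f1, f2`: images of `f1` and `f2` commute up to the Koszul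
sign, and the induced linear map `R1 ⊗[F] R2 → R`, `x ⊗ y ↦ f1(x)·f2(y)`, is
bijective. -/
structure IsGradedTensor (R1 R2 R : GradedFAlg F) (f1 : GradedFAlg.Hom R1 R)
    (f2 : GradedFAlg.Hom R2 R) : Prop where
  comm : ∀ (i j : ℤ) (x : R1.carrier) (y : R2.carrier),
    x ∈ R1.grading i → y ∈ R2.grading j →
    f2.toAlgHom y * f1.toAlgHom x = ((-1 : F) ^ (i * j)) • (f1.toAlgHom x * f2.toAlgHom y)
  bij : Function.Bijective (TensorProduct.lift
    (((LinearMap.mul F R.carrier).comp f1.toAlgHom.toLinearMap).compl₂ f2.toAlgHom.toLinearMap))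

/-- `D` realizes the exterior product of the deformations `D1` of `R1` and `D2`
of `R2` (where `R` is the graded tensor product of `R1` and `R2` via `f1, f2`):
there are graded algebra homomorphisms `g1 : R̃1 → D.alg` over `f1` and
`g2 : R̃2 → D.alg` over `f2` with `g1(t1) = t = g2(t2)` (i.e. `t1 ⊗ 1 = 1 ⊗ t2`),
whose images commute up to the Koszul sign and whose products span `D.alg`.
These data characterize `R̃1 ⊗_{F[ε]/ε²} R̃2` up to isomorphism of deformations. -/
def IsExtProdOf {R1 R2 R : GradedFAlg F} (f1 : GradedFAlg.Hom R1 R)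
    (f2 : GradedFAlg.Hom R2 R) {d : ℤ} (D1 : Deformation F R1 d)
    (D2 : Deformation F R2 d) (D : Deformation F R d) : Prop :=
  ∃ (g1 : GradedFAlg.Hom D1.alg D.alg) (g2 : GradedFAlg.Hom D2.alg D.alg),
    (∀ x : D1.alg.carrier, D.j.toAlgHom (g1.toAlgHom x) = f1.toAlgHom (D1.j.toAlgHom x)) ∧
    (∀ y : D2.alg.carrier, D.j.toAlgHom (g2.toAlgHom y) = f2.toAlgHom (D2.j.toAlgHom y)) ∧
    g1.toAlgHom D1.t = D.t ∧
    g2.toAlgHom D2.t = D.t ∧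
    (∀ (i j : ℤ) (x : D1.alg.carrier) (y : D2.alg.carrier),
      x ∈ D1.alg.grading i → y ∈ D2.alg.grading j →
      g2.toAlgHom y * g1.toAlgHom x =
        ((-1 : F) ^ (i * j)) • (g1.toAlgHom x * g2.toAlgHom y)) ∧
    Submodule.span F {w : D.alg.carrier |
      ∃ (x : D1.alg.carrier) (y : D2.alg.carrier), w = g1.toAlgHom x * g2.toAlgHom y} = ⊤

/-- A deformation `D` of `R` is semi-split with respect to a graded algebra
homomorphism `f1 : R1 → R` if there is a `d`-dimensional deformation of `R1`
and a morphism from it to `D` over `f1`. -/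
def SemiSplitWrt {R1 R : GradedFAlg F} (f1 : GradedFAlg.Hom R1 R) {d : ℤ}
    (D : Deformation F R d) : Prop :=
  ∃ D1 : Deformation F R1 d, Nonempty (DefMorphismOver f1 D1 D)

theorem TensorProduct.range_lift_eq_span {R M N P : Type*} [CommSemiring R]
    [AddCommMonoid M] [AddCommMonoid N] [AddCommMonoid P] [Module R M] [Module R N] [Module R P]
    (B : M →ₗ[R] N →ₗ[R] P) :
    LinearMap.range (TensorProduct.lift B) = Submodule.span R {p | ∃ m n, B m n = p} := by
  simp only [← Submodule.map_top, ← TensorProduct.span_tmul_eq_top, Submodule.map_span]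
  congr; ext; simp

theorem GradedFAlg.Hom.mul_comm_of_mem {A B C : GradedFAlg F} (g₁ : GradedFAlg.Hom A C)
    (g₂ : GradedFAlg.Hom B C) {i j : ℤ} {x : A.carrier} {y : B.carrier}
    (hx : x ∈ A.grading i) (hy : y ∈ B.grading j) :
    g₂.toAlgHom y * g₁.toAlgHom x = ((-1 : F) ^ (i * j)) • (g₁.toAlgHom x * g₂.toAlgHom y) := by
  rw [C.gcomm j i _ _ (g₂.graded j y hy) (g₁.graded i x hx), mul_comm j i]

theorem IsGradedTensor.span_mul_eq_top {R1 R2 R : GradedFAlg F} {f1 : GradedFAlg.Hom R1 R}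
    {f2 : GradedFAlg.Hom R2 R} (hT : IsGradedTensor R1 R2 R f1 f2) :
    Submodule.span F {r | ∃ x y, f1.toAlgHom x * f2.toAlgHom y = r} = ⊤ := by
  rw [← LinearMap.range_eq_top.mpr hT.bij.2, TensorProduct.range_lift_eq_span]
  rfl

namespace Deformation

variable {A : GradedFAlg F} {d : ℤ} (D : Deformation F A d)

theorem exists_eq_add_t_mul {M : Submodule F D.alg.carrier}
    (hM : M.map D.j.toAlgHom.toLinearMap = ⊤) (w : D.alg.carrier) :
    ∃ m ∈ M, ∃ z, w = m + D.t * z := by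
  obtain ⟨m, hm, hjm⟩ : D.j.toAlgHom w ∈ M.map D.j.toAlgHom.toLinearMap := hM ▸ trivial
  obtain ⟨z, hz⟩ := (D.j_ker (w - m)).mp (by simpa [sub_eq_zero] using hjm.symm)
  exact ⟨m, hm, z, by rw [← hz, add_sub_cancel]⟩

/-- Nakayama's lemma for the square-zero element `t`. -/
theorem eq_top_of_map_j_eq_top {M : Submodule F D.alg.carrier}
    (htM : ∀ m ∈ M, D.t * m ∈ M) (hM : M.map D.j.toAlgHom.toLinearMap = ⊤) : M = ⊤ := by
  refine eq_top_iff.mpr fun w _ => ?_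
  obtain ⟨m, hm, z, rfl⟩ := D.exists_eq_add_t_mul hM w
  obtain ⟨m', hm', z', rfl⟩ := D.exists_eq_add_t_mul hM z
  have hw : m + D.t * (m' + D.t * z') = m + D.t * m' := by
    rw [mul_add, ← mul_assoc, D.t_sq, zero_mul, add_zero]
  rw [hw]
  exact M.add_mem hm (htM m' hm')

protected theorem Iso.refl : D.Iso D :=
  ⟨⟨GradedFAlg.Hom.id D.alg, rfl, fun _ => rfl⟩, Function.bijective_id⟩

end Deformation

section SemiSplit

variable {R1 R2 R : GradedFAlg F} {f1 : GradedFAlg.Hom R1 R} {f2 : GradedFAlg.Hom R2 R} {d : ℤ}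
  {D1 : Deformation F R1 d} {D2 : Deformation F R2 d} {D : Deformation F R d}

theorem IsGradedTensor.span_mul_defMorphismOver_eq_top (hT : IsGradedTensor R1 R2 R f1 f2)
    (φ1 : DefMorphismOver f1 D1 D) (φ2 : DefMorphismOver f2 D2 D) :
    Submodule.span F
      {w | ∃ x y, w = φ1.toHom.toAlgHom x * φ2.toHom.toAlgHom y} = ⊤ := by
  apply D.eq_top_of_map_j_eq_top
  · intro m hm
    refine Submodule.span_induction (p := fun m _ => D.t * m ∈ _) ?_ ?_ ?_ ?_ hm
    · rintro _ ⟨x, y, rfl⟩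
      refine Submodule.subset_span ⟨D1.t * x, y, ?_⟩
      rw [map_mul, φ1.map_t, mul_assoc]
    · simp
    · intro _ _ _ _ ha hb
      simpa [mul_add] using Submodule.add_mem _ ha hb
    · intro c _ _ h
      simpa [mul_smul_comm] using Submodule.smul_mem _ c h
  · rw [Submodule.map_span, eq_top_iff, ← hT.span_mul_eq_top, Submodule.span_le]
    rintro _ ⟨x, y, rfl⟩
    obtain ⟨x', rfl⟩ := D1.j_surj x
    obtain ⟨y', rfl⟩ := D2.j_surj y
    refine Submodule.subset_span ⟨_, ⟨x', y', rfl⟩, ?_⟩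
    simp [φ1.over_f, φ2.over_f]

theorem IsGradedTensor.isExtProdOf (hT : IsGradedTensor R1 R2 R f1 f2)
    (φ1 : DefMorphismOver f1 D1 D) (φ2 : DefMorphismOver f2 D2 D) :
    IsExtProdOf f1 f2 D1 D2 D :=
  ⟨φ1.toHom, φ2.toHom, φ1.over_f, φ2.over_f, φ1.map_t, φ2.map_t,
    fun _ _ _ _ hx hy => φ1.toHom.mul_comm_of_mem φ2.toHom hx hy,
    hT.span_mul_defMorphismOver_eq_top φ1 φ2⟩

end SemiSplit

theorem semisplit_both_implies_split_general
    {F : Type} [Field F] (R1 R2 R : GradedFAlg F)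
    (f1 : GradedFAlg.Hom R1 R) (f2 : GradedFAlg.Hom R2 R)
    (hT : IsGradedTensor R1 R2 R f1 f2)
    (d : ℤ) (D : Deformation F R d)
    (h1 : SemiSplitWrt f1 D) (h2 : SemiSplitWrt f2 D) :
    ∃ (D1 : Deformation F R1 d) (D2 : Deformation F R2 d) (D' : Deformation F R d),
      IsExtProdOf f1 f2 D1 D2 D' ∧ Deformation.Iso D' D := by
  obtain ⟨D1, ⟨φ1⟩⟩ := h1
  obtain ⟨D2, ⟨φ2⟩⟩ := h2
  exact ⟨D1, D2, D, hT.isExtProdOf φ1 φ2, Deformation.Iso.refl D⟩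

/-- Let `R1, R2` be graded `F`-algebras, `R = R1 ⊗ R2` their
graded tensor product, and `d > 0`. If a `d`-dimensional deformation of `R` is
semi-split with respect to `R1` and also with respect to `R2`, then it is
split: isomorphic as a deformation of `R` to the exterior product of a
deformation of `R1` and a deformation of `R2`. -/
theorem semisplit_both_implies_split
    {F : Type} [Field F] (R1 R2 R : GradedFAlg F)
    (f1 : GradedFAlg.Hom R1 R) (f2 : GradedFAlg.Hom R2 R)
    (hT : IsGradedTensor R1 R2 R f1 f2)
    (d : ℤ) (hd : 0 < d) (D : Deformation F R d)
    (h1 : SemiSplitWrt f1 D) (h2 : SemiSplitWrt f2 D) :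
    ∃ (D1 : Deformation F R1 d) (D2 : Deformation F R2 d) (D' : Deformation F R d),
      IsExtProdOf f1 f2 D1 D2 D' ∧ Deformation.Iso D' D :=
  semisplit_both_implies_split_general R1 R2 R f1 f2 hT d D h1 h2
end
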